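/- (Lemma 4.3) Let the sequences {x_k^t}, {x_0^t}, {y^t} be generated by the flexible ADMM (Algorithm 4) for the sharing problem, with an arbitrary choice of index sets C^{t+1}, and suppose Assumption C holds. Then for every t ≥ 1: L({x_k^{t+1}}, x_0^{t+1}; y^{t+1}) ≥ Σ_{k=1}^K g_k(x_k^{t+1}) + ℓ(Σ_{k=1}^K A_k x_k^{t+1}) + ((ρ − L)/2)‖x_0^{t+1} − Σ_{k=1}^K A_k x_k^{t+1}‖² ≥ f̄; consequently the sequence t ↦ L({x_k^t}, x_0^t; y^t) is nonincreasing for t ≥ 1 and converges to a limit that is greater than or equal to f̄. -/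

import Mathlib

/-!
Once the `x₀`-block has been updated, which `C¹ = {0, …, K}` forces, the optimality condition of
the `x₀`-subproblem combined with the dual update gives `yᵗ = -∇ℓ(x₀ᵗ)` for every `t ≥ 1`. The
descent lemma for `ℓ` then bounds the augmented Lagrangian `𝓛` from below by
`f(x) + (ρ - L)/2 ‖x₀ - Σ_k A_k x_k‖² ≥ f̄`. Each block update of the Gauss–Seidel sweep can only
decrease `𝓛`, and the `(x₀, y)` update raises it by `ρ ‖x₀ - Σ_k A_k x_k‖² = ‖Δy‖² / ρ`, at most
`(L² / ρ) ‖Δx₀‖²` since `Δy = ∇ℓ(x₀ᵗ) - ∇ℓ(x₀ᵗ⁺¹)`; the `γ`-strong convexity of the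
`x₀`-subproblem lowers it by `γ/2 ‖Δx₀‖²`, which wins because `ργ > 2L²`.
-/

open Filter
open scoped RealInnerProductSpace BigOperators

/-- Augmented Lagrangian for the reformulated sharing problem:
`L({x_k}, x_0; y) = Σ_k g_k(x_k) + ℓ(x_0) + ⟨x_0 − Σ_k A_k x_k, y⟩
  + (ρ/2)‖x_0 − Σ_k A_k x_k‖²`. -/
noncomputable def augLs {M K : ℕ} {Nv : Fin K → ℕ}
    (g : ∀ k : Fin K, EuclideanSpace ℝ (Fin (Nv k)) → ℝ)
    (l : EuclideanSpace ℝ (Fin M) → ℝ) (ρ : ℝ)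
    (A : ∀ k : Fin K, EuclideanSpace ℝ (Fin (Nv k)) →L[ℝ] EuclideanSpace ℝ (Fin M))
    (xk : ∀ k : Fin K, EuclideanSpace ℝ (Fin (Nv k)))
    (x0 y : EuclideanSpace ℝ (Fin M)) : ℝ :=
  (∑ k, g k (xk k)) + l x0 + ⟪x0 - ∑ k, A k (xk k), y⟫
    + ρ / 2 * ‖x0 - ∑ k, A k (xk k)‖ ^ 2

open Topology InnerProductSpace Finset

section InnerProductSpace

variable {F : Type*} [NormedAddCommGroup F] [InnerProductSpace ℝ F]

lemma StrongConvexOn.add_convexOn {s : Set F} {m : ℝ} {f g : F → ℝ}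
    (hf : StrongConvexOn s m f) (hg : ConvexOn ℝ s g) : StrongConvexOn s m (f + g) := by
  have h := hf.add hg.uniformConvexOn_zero
  rw [add_zero] at h
  exact h

lemma StrongConvexOn.add_sq_norm_sub_le_of_isMinOn {s : Set F} {m : ℝ} {f : F → ℝ} {a z : F}
    (hf : StrongConvexOn s m f) (ha : a ∈ s) (hz : z ∈ s) (hmin : IsMinOn f s a) :
    f a + m / 2 * ‖z - a‖ ^ 2 ≤ f z := by
  -- compare `f a` with `f (θ • a + (1 - θ) • z)`, then let `θ → 1`
  have hθ : ∀ θ ∈ Set.Ioo (0 : ℝ) 1, θ * (m / 2 * ‖z - a‖ ^ 2) ≤ f z - f a := by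
    rintro θ ⟨hθ0, hθ1⟩
    have hconv : f (θ • a + (1 - θ) • z)
        ≤ θ * f a + (1 - θ) * f z - θ * (1 - θ) * (m / 2 * ‖a - z‖ ^ 2) :=
      hf.2 ha hz hθ0.le (sub_nonneg.2 hθ1.le) (add_sub_cancel θ 1)
    have hle : f a ≤ f (θ • a + (1 - θ) • z) :=
      hmin (hf.1 ha hz hθ0.le (sub_nonneg.2 hθ1.le) (add_sub_cancel θ 1))
    rw [norm_sub_rev a z] at hconv
    have : (1 - θ) * (θ * (m / 2 * ‖z - a‖ ^ 2)) ≤ (1 - θ) * (f z - f a) := by linarith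
    exact le_of_mul_le_mul_left this (sub_pos.2 hθ1)
  have hlim : Tendsto (fun θ : ℝ => θ * (m / 2 * ‖z - a‖ ^ 2)) (𝓝[<] 1)
      (𝓝 (m / 2 * ‖z - a‖ ^ 2)) := by
    simpa using ((tendsto_id (x := 𝓝 (1 : ℝ))).mul_const (m / 2 * ‖z - a‖ ^ 2)).mono_left
      nhdsWithin_le_nhds
  linarith [le_of_tendsto hlim (eventually_of_mem (Ioo_mem_nhdsLT zero_lt_one) hθ)]

lemma StrongConvexOn.add_inner_add_sq_norm_sub {m c : ℝ} {f : F → ℝ}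
    (hf : StrongConvexOn Set.univ m (fun z => f z + c / 2 * ‖z‖ ^ 2)) (b u : F) :
    StrongConvexOn Set.univ m (fun z => f z + ⟪b, z⟫ + c / 2 * ‖z - u‖ ^ 2) := by
  have haff : ConvexOn ℝ Set.univ (fun z => ⟪b - c • u, z⟫ + c / 2 * ‖u‖ ^ 2) :=
    ((innerₛₗ ℝ (b - c • u)).convexOn convex_univ).add_const _
  convert hf.add_convexOn haff using 1
  ext z
  simp only [Pi.add_apply, norm_sub_sq_real, inner_sub_left, real_inner_smul_left,
    real_inner_comm u z]
  ring

variable [CompleteSpace F]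

lemma IsLocalMin.hasGradientAt_eq_zero {f : F → ℝ} {a f' : F} (h : IsLocalMin f a)
    (hf : HasGradientAt f f' a) : f' = 0 :=
  (toDual ℝ F).map_eq_zero_iff.1 (h.hasFDerivAt_eq_zero hf.hasFDerivAt)

lemma HasGradientAt.add_inner_add_sq_norm_sub {f : F → ℝ} {a f' : F} (hf : HasGradientAt f f' a)
    (b u : F) (c : ℝ) :
    HasGradientAt (fun z => f z + ⟪b, z⟫ + c / 2 * ‖z - u‖ ^ 2) (f' + b + c • (a - u)) a := by
  rw [hasGradientAt_iff_hasFDerivAt] at hf ⊢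
  refine ((hf.add (innerSL ℝ b).hasFDerivAt).add
    (((hasFDerivAt_id a).sub_const u).norm_sq.const_mul (c / 2))).congr_fderiv ?_
  ext w
  simp only [add_apply, smul_apply, ContinuousLinearMap.comp_apply, toDual_apply_apply,
    innerSL_apply_apply, ContinuousLinearMap.id_apply, id, inner_add_left, real_inner_smul_left,
    smul_eq_mul, nsmul_eq_mul]
  ring

lemma le_add_inner_add_sq_of_lipschitz_gradient {f : F → ℝ} {f' : F → F} {L : ℝ}
    (hf : ∀ z, HasGradientAt f (f' z) z) (hL : ∀ u v, ‖f' u - f' v‖ ≤ L * ‖u - v‖) (u v : F) :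
    f u ≤ f v + ⟪f' v, u - v⟫ + L / 2 * ‖u - v‖ ^ 2 := by
  set d := u - v
  let φ : ℝ → ℝ := fun s => f (v + s • d) - s * ⟪f' v, d⟫ - L / 2 * s ^ 2 * ‖d‖ ^ 2
  have hφ : ∀ s, HasDerivAt φ (⟪f' (v + s • d), d⟫ - ⟪f' v, d⟫ - L * s * ‖d‖ ^ 2) s := by
    intro s
    have hline : HasDerivAt (fun s : ℝ => v + s • d) d s := by
      simpa using ((hasDerivAt_id s).smul_const d).const_add v
    have := (((hasGradientAt_iff_hasFDerivAt.1 (hf (v + s • d))).comp_hasDerivAt s hline).sub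
      ((hasDerivAt_id s).mul_const ⟪f' v, d⟫)).sub
      (((hasDerivAt_pow 2 s).const_mul (L / 2)).mul_const (‖d‖ ^ 2))
    refine this.congr_deriv ?_
    simp only [toDual_apply_apply]
    ring
  obtain ⟨c, hc, hslope⟩ := exists_hasDerivAt_eq_slope φ _ one_pos
    (fun s _ => (hφ s).continuousAt.continuousWithinAt) (fun s _ => hφ s)
  have hneg : ⟪f' (v + c • d), d⟫ - ⟪f' v, d⟫ - L * c * ‖d‖ ^ 2 ≤ 0 := by
    have h1 := real_inner_le_norm (f' (v + c • d) - f' v) d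
    have h2 := hL (v + c • d) v
    rw [add_sub_cancel_left, norm_smul, Real.norm_of_nonneg hc.1.le] at h2
    rw [inner_sub_left] at h1
    nlinarith [norm_nonneg d]
  have : φ 1 ≤ φ 0 := by
    rw [hslope, sub_zero, div_one] at hneg
    linarith
  simp only [φ, one_smul, zero_smul, add_zero, one_mul, zero_mul, sub_zero, d,
    add_sub_cancel] at this
  linarith

lemma dual_update_eq_neg_gradient {l : F → ℝ} {l' : F → F} (hl : ∀ z, HasGradientAt l (l' z) z)
    {ρ : ℝ} {u x₀ y y' : F}
    (hmin : ∀ z, l x₀ + ⟪y, x₀⟫ + ρ / 2 * ‖x₀ - u‖ ^ 2 ≤ l z + ⟪y, z⟫ + ρ / 2 * ‖z - u‖ ^ 2)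
    (hy' : y' = y + ρ • (x₀ - u)) : y' = -l' x₀ := by
  have h := IsLocalMin.hasGradientAt_eq_zero (Eventually.of_forall hmin)
    ((hl x₀).add_inner_add_sq_norm_sub y u ρ)
  rw [hy', eq_neg_iff_add_eq_zero, ← h]
  abel

end InnerProductSpace

lemma exists_tendsto_ge_of_antitone_from {u : ℕ → ℝ} {b : ℝ} (N : ℕ)
    (hanti : ∀ n, N ≤ n → u (n + 1) ≤ u n) (hb : ∀ n, N ≤ n → b ≤ u n) :
    ∃ c, b ≤ c ∧ Tendsto u atTop (𝓝 c) := by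
  have hv : Antitone fun n => u (n + N) :=
    antitone_nat_of_succ_le fun n => by simpa [add_right_comm] using hanti (n + N) (by omega)
  have hvb : ∀ n, b ≤ u (n + N) := fun n => hb _ (by omega)
  exact ⟨⨅ n, u (n + N), le_ciInf hvb, (tendsto_add_atTop_iff_nat N).1
    (tendsto_atTop_ciInf hv ⟨b, by rintro _ ⟨n, rfl⟩; exact hvb n⟩)⟩

lemma forall_one_le_of_flexible_update {α : Type*} {C : ℕ → Finset α} {o : α} {P : ℕ → Prop}
    (h1 : o ∈ C 1) (hupd : ∀ t, o ∈ C (t + 1) → P (t + 1))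
    (hkeep : ∀ t, o ∉ C (t + 1) → P t → P (t + 1)) : ∀ t, 1 ≤ t → P t := by
  intro t ht
  induction t, ht using Nat.le_induction with
  | base => exact hupd 0 h1
  | succ t _ ih => by_cases h : o ∈ C (t + 1) <;> simp_all

lemma Finset.sum_erase_eq_sum_filter_lt_add_sum_filter_gt {ι β : Type*} [Fintype ι]
    [LinearOrder ι] [AddCommMonoid β] (f : ι → β) (k : ι) :
    ∑ j ∈ univ.erase k, f j = ∑ j ∈ univ.filter (· < k), f j + ∑ j ∈ univ.filter (k < ·), f j := by
  rw [← sum_union (disjoint_filter.2 fun j _ h h' => lt_asymm h h')]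
  congr 1
  ext j
  simp [lt_or_lt_iff_ne]

section AugmentedLagrangian

variable {M K : ℕ} {Nv : Fin K → ℕ} {g : ∀ k : Fin K, EuclideanSpace ℝ (Fin (Nv k)) → ℝ}
  {l : EuclideanSpace ℝ (Fin M) → ℝ} {ρ : ℝ}
  {A : ∀ k : Fin K, EuclideanSpace ℝ (Fin (Nv k)) →L[ℝ] EuclideanSpace ℝ (Fin M)}

lemma augLs_eq_sum_erase (xk : ∀ k : Fin K, EuclideanSpace ℝ (Fin (Nv k)))
    (x0 y : EuclideanSpace ℝ (Fin M)) (k : Fin K) :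
    augLs g l ρ A xk x0 y =
      ((∑ j ∈ univ.erase k, g j (xk j)) + l x0 + ⟪x0 - ∑ j ∈ univ.erase k, A j (xk j), y⟫)
      + ((g k (xk k) - ⟪y, A k (xk k)⟫)
        + ρ / 2 * ‖(x0 - ∑ j ∈ univ.erase k, A j (xk j)) - A k (xk k)‖ ^ 2) := by
  rw [augLs, ← sum_erase_add _ _ (mem_univ k), ← sum_erase_add _ _ (mem_univ k),
    sub_add_eq_sub_sub, inner_sub_left, real_inner_comm (A k (xk k)) y]
  ring

lemma augLs_update_le (xk : ∀ k : Fin K, EuclideanSpace ℝ (Fin (Nv k)))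
    (x0 y : EuclideanSpace ℝ (Fin M)) (k : Fin K) (z : EuclideanSpace ℝ (Fin (Nv k)))
    (h : g k z - ⟪y, A k z⟫ + ρ / 2 * ‖x0 - ∑ j ∈ univ.erase k, A j (xk j) - A k z‖ ^ 2
      ≤ g k (xk k) - ⟪y, A k (xk k)⟫
        + ρ / 2 * ‖x0 - ∑ j ∈ univ.erase k, A j (xk j) - A k (xk k)‖ ^ 2) :
    augLs g l ρ A (Function.update xk k z) x0 y ≤ augLs g l ρ A xk x0 y := by
  have hoff : ∀ j ∈ univ.erase k, Function.update xk k z j = xk j :=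
    fun j hj => Function.update_of_ne (ne_of_mem_erase hj) _ _
  rw [augLs_eq_sum_erase _ _ _ k, augLs_eq_sum_erase xk _ _ k,
    sum_congr rfl fun j hj => congrArg (g j) (hoff j hj),
    sum_congr rfl fun j hj => congrArg (A j) (hoff j hj), Function.update_self]
  linarith

lemma augLs_le_of_gaussSeidel_sweep (xk xk' : ∀ k : Fin K, EuclideanSpace ℝ (Fin (Nv k)))
    (x0 y : EuclideanSpace ℝ (Fin M))
    (hmin : ∀ k, g k (xk' k) - ⟪y, A k (xk' k)⟫
        + ρ / 2 * ‖x0 - ∑ j ∈ univ.filter (· < k), A j (xk' j)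
          - ∑ j ∈ univ.filter (k < ·), A j (xk j) - A k (xk' k)‖ ^ 2
      ≤ g k (xk k) - ⟪y, A k (xk k)⟫
        + ρ / 2 * ‖x0 - ∑ j ∈ univ.filter (· < k), A j (xk' j)
          - ∑ j ∈ univ.filter (k < ·), A j (xk j) - A k (xk k)‖ ^ 2) :
    augLs g l ρ A xk' x0 y ≤ augLs g l ρ A xk x0 y := by
  let m : ℕ → ∀ k : Fin K, EuclideanSpace ℝ (Fin (Nv k)) :=
    fun i k => if (k : ℕ) < i then xk' k else xk k
  have hstep : ∀ i, i < K → augLs g l ρ A (m (i + 1)) x0 y ≤ augLs g l ρ A (m i) x0 y := by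
    intro i hi
    set k : Fin K := ⟨i, hi⟩
    have hupd : m (i + 1) = Function.update (m i) k (xk' k) := by
      ext1 j
      by_cases hj : j = k
      · subst hj; simp [m, k]
      · have : (j : ℕ) < i + 1 ↔ (j : ℕ) < i := by
          have : (j : ℕ) ≠ i := fun h => hj (Fin.ext h)
          omega
        simp only [m, Function.update_of_ne hj, this]
    have hres : ∑ j ∈ univ.erase k, A j (m i j)
        = ∑ j ∈ univ.filter (· < k), A j (xk' j) + ∑ j ∈ univ.filter (k < ·), A j (xk j) := by
      rw [sum_erase_eq_sum_filter_lt_add_sum_filter_gt]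
      congr 1 <;> refine sum_congr rfl fun j hj => ?_ <;> have := (mem_filter.1 hj).2
      · simp [m, show (j : ℕ) < i from this]
      · simp [m, show ¬ (j : ℕ) < i from not_lt.2 (le_of_lt this)]
    rw [hupd]
    refine augLs_update_le _ _ _ k _ ?_
    simpa only [hres, sub_add_eq_sub_sub, m, k, lt_irrefl, if_false] using hmin k
  have hm : ∀ i, i ≤ K → augLs g l ρ A (m i) x0 y ≤ augLs g l ρ A xk x0 y := by
    intro i hi
    induction i with
    | zero => simp [m]
    | succ i ih => exact (hstep i hi).trans (ih (by omega))
  simpa [m] using hm K le_rfl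

lemma augLs_add_dual (xk : ∀ k : Fin K, EuclideanSpace ℝ (Fin (Nv k)))
    (x0 y w : EuclideanSpace ℝ (Fin M)) :
    augLs g l ρ A xk x0 (y + w) = augLs g l ρ A xk x0 y + ⟪x0 - ∑ k, A k (xk k), w⟫ := by
  simp only [augLs, inner_add_right]
  ring

lemma sum_add_sq_le_augLs_neg_gradient {l' : EuclideanSpace ℝ (Fin M) → EuclideanSpace ℝ (Fin M)}
    {Lc : ℝ} (hgrad : ∀ z, HasGradientAt l (l' z) z) (hLip : ∀ u v, ‖l' u - l' v‖ ≤ Lc * ‖u - v‖)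
    (xk : ∀ k : Fin K, EuclideanSpace ℝ (Fin (Nv k))) (x0 : EuclideanSpace ℝ (Fin M)) :
    (∑ k, g k (xk k)) + l (∑ k, A k (xk k)) + (ρ - Lc) / 2 * ‖x0 - ∑ k, A k (xk k)‖ ^ 2
      ≤ augLs g l ρ A xk x0 (-l' x0) := by
  have h := le_add_inner_add_sq_of_lipschitz_gradient hgrad hLip (∑ k, A k (xk k)) x0
  rw [norm_sub_rev] at h
  rw [augLs, inner_neg_right, ← inner_neg_left, neg_sub, real_inner_comm]
  linarith

lemma augLs_x0_dual_step_le {l' : EuclideanSpace ℝ (Fin M) → EuclideanSpace ℝ (Fin M)}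
    {Lc γ : ℝ} (hLip : ∀ u v, ‖l' u - l' v‖ ≤ Lc * ‖u - v‖)
    (hstrong : StrongConvexOn Set.univ γ (fun z => l z + ρ / 2 * ‖z‖ ^ 2))
    (hρ : 0 < ρ) (hργ : 2 * Lc ^ 2 < ρ * γ) (xk : ∀ k : Fin K, EuclideanSpace ℝ (Fin (Nv k)))
    {x0 x0' y y' : EuclideanSpace ℝ (Fin M)} (hy : y = -l' x0) (hy' : y' = -l' x0')
    (hmin : ∀ z, l x0' + ⟪y, x0'⟫ + ρ / 2 * ‖x0' - ∑ k, A k (xk k)‖ ^ 2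
      ≤ l z + ⟪y, z⟫ + ρ / 2 * ‖z - ∑ k, A k (xk k)‖ ^ 2)
    (hdual : y' = y + ρ • (x0' - ∑ k, A k (xk k))) :
    augLs g l ρ A xk x0' y' ≤ augLs g l ρ A xk x0 y := by
  set r := x0' - ∑ k, A k (xk k)
  have hgrowth := (hstrong.add_inner_add_sq_norm_sub y (∑ k, A k (xk k)))
    |>.add_sq_norm_sub_le_of_isMinOn (Set.mem_univ x0') (Set.mem_univ x0) fun z _ => hmin z
  have hL : ρ * ‖r‖ ≤ Lc * ‖x0 - x0'‖ := by
    have : ρ • r = l' x0 - l' x0' := by rw [← neg_sub_neg, ← hy, ← hy', hdual, add_sub_cancel_left]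
    rw [← Real.norm_of_nonneg hρ.le, ← norm_smul, this]
    exact hLip _ _
  have hdecr : ρ * ‖r‖ ^ 2 ≤ γ / 2 * ‖x0 - x0'‖ ^ 2 := by
    have h2 : (ρ * ‖r‖) ^ 2 ≤ (Lc * ‖x0 - x0'‖) ^ 2 := pow_le_pow_left₀ (by positivity) hL 2
    nlinarith [sq_nonneg ‖x0 - x0'‖, sq_nonneg ‖r‖]
  have hlin : ∀ z, augLs g l ρ A xk z y
      = (∑ k, g k (xk k)) + (l z + ⟪y, z⟫ + ρ / 2 * ‖z - ∑ k, A k (xk k)‖ ^ 2)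
        - ⟪∑ k, A k (xk k), y⟫ := by
    intro z
    rw [augLs, inner_sub_left, real_inner_comm z y]
    ring
  rw [hdual, augLs_add_dual, real_inner_smul_right, real_inner_self_eq_norm_sq, hlin, hlin]
  linarith

end AugmentedLagrangian

theorem lemma4_3_general
    {M K : ℕ} {Nv : Fin K → ℕ}
    (g : ∀ k : Fin K, EuclideanSpace ℝ (Fin (Nv k)) → ℝ)
    (l : EuclideanSpace ℝ (Fin M) → ℝ)
    (l' : EuclideanSpace ℝ (Fin M) → EuclideanSpace ℝ (Fin M))
    (A : ∀ k : Fin K, EuclideanSpace ℝ (Fin (Nv k)) →L[ℝ] EuclideanSpace ℝ (Fin M))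
    (X : ∀ k : Fin K, Set (EuclideanSpace ℝ (Fin (Nv k))))
    (Lc ρ : ℝ)
    (x : ℕ → ∀ k : Fin K, EuclideanSpace ℝ (Fin (Nv k)))
    (x0 y : ℕ → EuclideanSpace ℝ (Fin M))
    (C : ℕ → Finset (Option (Fin K)))
    -- Assumption C1
    (hgrad : ∀ z, HasGradientAt l (l' z) z)
    (hLip : ∀ u v, ‖l' u - l' v‖ ≤ Lc * ‖u - v‖)
    (hρ : 0 < ρ)
    -- Algorithm 4
    (hC1 : C 1 = Finset.univ)
    (hxupd : ∀ (t : ℕ) (k : Fin K),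
      (some k ∈ C (t + 1) → x (t + 1) k ∈ X k ∧ ∀ z ∈ X k,
        g k (x (t + 1) k) - ⟪y t, A k (x (t + 1) k)⟫
            + ρ / 2 * ‖x0 t - (∑ j ∈ Finset.univ.filter (fun j => j < k), A j (x (t + 1) j))
                - (∑ j ∈ Finset.univ.filter (fun j => k < j), A j (x t j))
                - A k (x (t + 1) k)‖ ^ 2
          ≤ g k z - ⟪y t, A k z⟫
            + ρ / 2 * ‖x0 t - (∑ j ∈ Finset.univ.filter (fun j => j < k), A j (x (t + 1) j))
                - (∑ j ∈ Finset.univ.filter (fun j => k < j), A j (x t j))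
                - A k z‖ ^ 2) ∧
      (some k ∉ C (t + 1) → x (t + 1) k = x t k))
    (hx0upd : ∀ t : ℕ,
      (none ∈ C (t + 1) → ∀ z : EuclideanSpace ℝ (Fin M),
        l (x0 (t + 1)) + ⟪y t, x0 (t + 1)⟫
            + ρ / 2 * ‖x0 (t + 1) - ∑ k, A k (x (t + 1) k)‖ ^ 2
          ≤ l z + ⟪y t, z⟫ + ρ / 2 * ‖z - ∑ k, A k (x (t + 1) k)‖ ^ 2) ∧
      (none ∉ C (t + 1) → x0 (t + 1) = x0 t))
    (hyupd : ∀ t : ℕ,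
      (none ∈ C (t + 1) →
        y (t + 1) = y t + ρ • (x0 (t + 1) - ∑ k, A k (x (t + 1) k))) ∧
      (none ∉ C (t + 1) → y (t + 1) = y t))
    -- Assumption C2
    (γρ : ℝ)
    (hstrong0 : StrongConvexOn Set.univ γρ
      (fun z : EuclideanSpace ℝ (Fin M) => l z + ρ / 2 * ‖z‖ ^ 2))
    (hC2b : 2 * Lc ^ 2 < ρ * γρ) (hC2c : Lc ≤ ρ)
    -- Assumption C3 : `f` is bounded below over the feasible set
    (hbdd : BddBelow ((fun xx : ∀ k : Fin K, EuclideanSpace ℝ (Fin (Nv k)) =>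
      (∑ k, g k (xx k)) + l (∑ k, A k (xx k))) '' {xx | ∀ k, xx k ∈ X k})) :
    (∀ t : ℕ, 1 ≤ t →
      sInf ((fun xx : ∀ k : Fin K, EuclideanSpace ℝ (Fin (Nv k)) =>
            (∑ k, g k (xx k)) + l (∑ k, A k (xx k))) '' {xx | ∀ k, xx k ∈ X k})
          ≤ (∑ k, g k (x (t + 1) k)) + l (∑ k, A k (x (t + 1) k))
            + (ρ - Lc) / 2 * ‖x0 (t + 1) - ∑ k, A k (x (t + 1) k)‖ ^ 2 ∧
      (∑ k, g k (x (t + 1) k)) + l (∑ k, A k (x (t + 1) k))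
            + (ρ - Lc) / 2 * ‖x0 (t + 1) - ∑ k, A k (x (t + 1) k)‖ ^ 2
        ≤ augLs g l ρ A (x (t + 1)) (x0 (t + 1)) (y (t + 1))) ∧
    (∀ t : ℕ, 1 ≤ t →
      augLs g l ρ A (x (t + 1)) (x0 (t + 1)) (y (t + 1))
        ≤ augLs g l ρ A (x t) (x0 t) (y t)) ∧
    ∃ LcL : ℝ,
      sInf ((fun xx : ∀ k : Fin K, EuclideanSpace ℝ (Fin (Nv k)) =>
          (∑ k, g k (xx k)) + l (∑ k, A k (xx k))) '' {xx | ∀ k, xx k ∈ X k}) ≤ LcL ∧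
      Tendsto (fun t => augLs g l ρ A (x t) (x0 t) (y t)) atTop (nhds LcL) := by
  have hC : ∀ o, o ∈ C 1 := by simp [hC1]
  have hX : ∀ k, ∀ t, 1 ≤ t → x t k ∈ X k := fun k =>
    forall_one_le_of_flexible_update (hC (some k)) (fun t h => ((hxupd t k).1 h).1)
      fun t h hx => (hxupd t k).2 h ▸ hx
  have hgrad_upd : ∀ t, none ∈ C (t + 1) → y (t + 1) = -l' (x0 (t + 1)) := fun t h =>
    dual_update_eq_neg_gradient hgrad ((hx0upd t).1 h) ((hyupd t).1 h)
  have hy : ∀ t, 1 ≤ t → y t = -l' (x0 t) :=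
    forall_one_le_of_flexible_update (hC none) hgrad_upd fun t h ih => by
      rwa [(hyupd t).2 h, (hx0upd t).2 h]
  have hdesc : ∀ t, 1 ≤ t →
      augLs g l ρ A (x (t + 1)) (x0 (t + 1)) (y (t + 1)) ≤ augLs g l ρ A (x t) (x0 t) (y t) := by
    intro t ht
    have hsweep :
        augLs g l ρ A (x (t + 1)) (x0 t) (y t) ≤ augLs g l ρ A (x t) (x0 t) (y t) := by
      refine augLs_le_of_gaussSeidel_sweep _ _ _ _ fun k => ?_
      by_cases hk : some k ∈ C (t + 1)
      · exact ((hxupd t k).1 hk).2 _ (hX k t ht)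
      · rw [(hxupd t k).2 hk]
    by_cases h : none ∈ C (t + 1)
    · exact (augLs_x0_dual_step_le hLip hstrong0 hρ hC2b _ (hy t ht) (hgrad_upd t h)
        ((hx0upd t).1 h) ((hyupd t).1 h)).trans hsweep
    · rwa [(hx0upd t).2 h, (hyupd t).2 h]
  refine (fun hlow => ⟨hlow, hdesc, ?_⟩) fun t ht => ⟨?_, ?_⟩
  · exact exists_tendsto_ge_of_antitone_from 2 (fun n hn => hdesc n (by omega)) fun n hn => by
      obtain ⟨t, rfl⟩ : ∃ t, n = t + 1 := ⟨n - 1, by omega⟩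
      exact (hlow t (by omega)).1.trans (hlow t (by omega)).2
  · exact (csInf_le hbdd ⟨x (t + 1), fun k => hX k _ (by omega), rfl⟩).trans
      (le_add_of_nonneg_right (mul_nonneg (by linarith) (sq_nonneg _)))
  · rw [hy (t + 1) (by omega)]
    exact sum_add_sq_le_augLs_neg_gradient hgrad hLip _ _

/-- **Lemma 4.3.**  For the flexible ADMM (Algorithm 4) on the sharing problem, under
Assumption C, for every `t ≥ 1`:
`L^{t+1} ≥ Σ_k g_k(x_k^{t+1}) + ℓ(Σ_k A_k x_k^{t+1}) + ((ρ − L)/2)‖x_0^{t+1} − Σ_k A_k x_k^{t+1}‖²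
   ≥ f̄`; consequently `t ↦ L^t` is nonincreasing for `t ≥ 1` and converges to a limit `≥ f̄`. -/
theorem lemma4_3
    {M K : ℕ} {Nv : Fin K → ℕ} (hK : 1 ≤ K)
    (g : ∀ k : Fin K, EuclideanSpace ℝ (Fin (Nv k)) → ℝ)
    (l : EuclideanSpace ℝ (Fin M) → ℝ)
    (l' : EuclideanSpace ℝ (Fin M) → EuclideanSpace ℝ (Fin M))
    (A : ∀ k : Fin K, EuclideanSpace ℝ (Fin (Nv k)) →L[ℝ] EuclideanSpace ℝ (Fin M))
    (X : ∀ k : Fin K, Set (EuclideanSpace ℝ (Fin (Nv k))))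
    (Lc ρ : ℝ)
    (x : ℕ → ∀ k : Fin K, EuclideanSpace ℝ (Fin (Nv k)))
    (x0 y : ℕ → EuclideanSpace ℝ (Fin M))
    (C : ℕ → Finset (Option (Fin K)))
    -- Assumption C1
    (hgrad : ∀ z, HasGradientAt l (l' z) z)
    (hLpos : 0 < Lc)
    (hLip : ∀ u v, ‖l' u - l' v‖ ≤ Lc * ‖u - v‖)
    (hXne : ∀ k, (X k).Nonempty) (hXcl : ∀ k, IsClosed (X k))
    (hXcv : ∀ k, Convex ℝ (X k))
    (hA : ∀ k, Function.Injective (A k))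
    (hρ : 0 < ρ)
    -- Algorithm 4
    (hC1 : C 1 = Finset.univ)
    (hxupd : ∀ (t : ℕ) (k : Fin K),
      (some k ∈ C (t + 1) → x (t + 1) k ∈ X k ∧ ∀ z ∈ X k,
        g k (x (t + 1) k) - ⟪y t, A k (x (t + 1) k)⟫
            + ρ / 2 * ‖x0 t - (∑ j ∈ Finset.univ.filter (fun j => j < k), A j (x (t + 1) j))
                - (∑ j ∈ Finset.univ.filter (fun j => k < j), A j (x t j))
                - A k (x (t + 1) k)‖ ^ 2
          ≤ g k z - ⟪y t, A k z⟫
            + ρ / 2 * ‖x0 t - (∑ j ∈ Finset.univ.filter (fun j => j < k), A j (x (t + 1) j))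
                - (∑ j ∈ Finset.univ.filter (fun j => k < j), A j (x t j))
                - A k z‖ ^ 2) ∧
      (some k ∉ C (t + 1) → x (t + 1) k = x t k))
    (hx0upd : ∀ t : ℕ,
      (none ∈ C (t + 1) → ∀ z : EuclideanSpace ℝ (Fin M),
        l (x0 (t + 1)) + ⟪y t, x0 (t + 1)⟫
            + ρ / 2 * ‖x0 (t + 1) - ∑ k, A k (x (t + 1) k)‖ ^ 2
          ≤ l z + ⟪y t, z⟫ + ρ / 2 * ‖z - ∑ k, A k (x (t + 1) k)‖ ^ 2) ∧
      (none ∉ C (t + 1) → x0 (t + 1) = x0 t))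
    (hyupd : ∀ t : ℕ,
      (none ∈ C (t + 1) →
        y (t + 1) = y t + ρ • (x0 (t + 1) - ∑ k, A k (x (t + 1) k))) ∧
      (none ∉ C (t + 1) → y (t + 1) = y t))
    -- Assumption C2
    (γk : Fin K → ℝ) (γρ : ℝ)
    (hγkpos : ∀ k, 0 < γk k) (hγρpos : 0 < γρ)
    (hstrongk : ∀ k, StrongConvexOn (X k) (γk k)
      (fun z : EuclideanSpace ℝ (Fin (Nv k)) => g k z + ρ / 2 * ‖A k z‖ ^ 2))
    (hstrong0 : StrongConvexOn Set.univ γρ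
      (fun z : EuclideanSpace ℝ (Fin M) => l z + ρ / 2 * ‖z‖ ^ 2))
    (hC2b : 2 * Lc ^ 2 < ρ * γρ) (hC2c : Lc ≤ ρ)
    -- Assumption C4
    (KK : Finset (Fin K)) (Lgk : Fin K → ℝ)
    (gg' : ∀ k : Fin K, EuclideanSpace ℝ (Fin (Nv k)) → EuclideanSpace ℝ (Fin (Nv k)))
    (hKcvx : ∀ k ∈ KK, ConvexOn ℝ Set.univ (g k))
    (hKsm : ∀ k ∉ KK, (∀ z, HasGradientAt (g k) (gg' k z) z) ∧ 0 < Lgk k ∧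
      ∀ u ∈ X k, ∀ v ∈ X k, ‖gg' k u - gg' k v‖ ≤ Lgk k * ‖u - v‖)
    -- Assumption C3 : `f` is bounded below over the feasible set
    (hbdd : BddBelow ((fun xx : ∀ k : Fin K, EuclideanSpace ℝ (Fin (Nv k)) =>
      (∑ k, g k (xx k)) + l (∑ k, A k (xx k))) '' {xx | ∀ k, xx k ∈ X k})) :
    (∀ t : ℕ, 1 ≤ t →
      sInf ((fun xx : ∀ k : Fin K, EuclideanSpace ℝ (Fin (Nv k)) =>
            (∑ k, g k (xx k)) + l (∑ k, A k (xx k))) '' {xx | ∀ k, xx k ∈ X k})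
          ≤ (∑ k, g k (x (t + 1) k)) + l (∑ k, A k (x (t + 1) k))
            + (ρ - Lc) / 2 * ‖x0 (t + 1) - ∑ k, A k (x (t + 1) k)‖ ^ 2 ∧
      (∑ k, g k (x (t + 1) k)) + l (∑ k, A k (x (t + 1) k))
            + (ρ - Lc) / 2 * ‖x0 (t + 1) - ∑ k, A k (x (t + 1) k)‖ ^ 2
        ≤ augLs g l ρ A (x (t + 1)) (x0 (t + 1)) (y (t + 1))) ∧
    (∀ t : ℕ, 1 ≤ t →
      augLs g l ρ A (x (t + 1)) (x0 (t + 1)) (y (t + 1))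
        ≤ augLs g l ρ A (x t) (x0 t) (y t)) ∧
    ∃ LcL : ℝ,
      sInf ((fun xx : ∀ k : Fin K, EuclideanSpace ℝ (Fin (Nv k)) =>
          (∑ k, g k (xx k)) + l (∑ k, A k (xx k))) '' {xx | ∀ k, xx k ∈ X k}) ≤ LcL ∧
      Tendsto (fun t => augLs g l ρ A (x t) (x0 t) (y t)) atTop (nhds LcL) :=
  lemma4_3_general g l l' A X Lc ρ x x0 y C hgrad hLip hρ hC1 hxupd hx0upd hyupd γρ hstrong0 hC2b
    hC2c hbdd
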